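/- Let G be a network with request R and extended graph G_ext, and let f : E_ext → ℕ. Let W ⊆ V_G be such that f(δ⁺_{E_ext}(v)) = f(δ⁻_{E_ext}(v)) for all v ∈ W and f(δ⁺_{E_R}(W)) = 0. If u ∈ W and there exists an edge (a,u) ∈ E_ext with a ∉ W and f(a,u) ≥ 1, then there exists a directed path ⟨u, …, o⁻_S⟩ from u to the super sink o⁻_S in the support graph G^f_ext all of whose nodes except the last lie in W. -/

import Mathlib

/-! Formalization of the Constrained Virtual Steiner Arborescence Problem (CVSAP),
its single-commodity flow IP formulation, and related notions. -/

/-- Vertices of the extended graph: original vertices plus super source `src`,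
super sink `sinkS` for Steiner nodes and super sink `sinkR` for the root. -/
inductive ExtV (V : Type) where
  | orig : V → ExtV V
  | src : ExtV V
  | sinkS : ExtV V
  | sinkR : ExtV V
deriving DecidableEq

open ExtV

/-- A (finite) capacitated directed network. -/
structure Network (V : Type) [DecidableEq V] where
  E : Finset (V × V)
  uE : V × V → ℕ
  cE : V × V → ℝ

/-- A request `R = (root, S, T, u_r, c_S, u_S)`. -/
structure Request (V : Type) [DecidableEq V] where
  root : V
  S : Finset V
  T : Finset V
  ur : ℕ
  cS : V → ℝ
  uS : V → ℕ

variable {V : Type} [DecidableEq V]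

/-- Well-formedness: root is neither terminal nor Steiner site, Steiner sites and terminals
are disjoint, and all costs are positive. -/
def RequestWF (N : Network V) (R : Request V) : Prop :=
  R.root ∉ R.T ∧ R.root ∉ R.S ∧ Disjoint R.S R.T ∧
    (∀ s ∈ R.S, 0 < R.cS s) ∧ (∀ e ∈ N.E, 0 < N.cE e)

/-- Edge set of the extended graph `G_ext`. -/
def Eext (N : Network V) (R : Request V) : Finset (ExtV V × ExtV V) :=
  (N.E.image fun e => (orig e.1, orig e.2)) ∪
    ({(orig R.root, sinkR)} : Finset (ExtV V × ExtV V)) ∪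
    (R.S.image fun s => (orig s, sinkS)) ∪
    (R.S.image fun s => (src, orig s)) ∪
    (R.T.image fun t => (src, orig t))

/-- `E_R`: the extended edges without the edges into the Steiner super sink. -/
def ERext (N : Network V) (R : Request V) : Finset (ExtV V × ExtV V) :=
  (Eext N R).filter fun e => e.2 ≠ sinkS

/-- Edges of `F` leaving node `v`. -/
def outV (F : Finset (ExtV V × ExtV V)) (v : ExtV V) : Finset (ExtV V × ExtV V) :=
  F.filter fun e => e.1 = v

/-- Edges of `F` entering node `v`. -/
def inV (F : Finset (ExtV V × ExtV V)) (v : ExtV V) : Finset (ExtV V × ExtV V) :=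
  F.filter fun e => e.2 = v

/-- Edges of `F` leaving the node set `W`. -/
def outSet (F : Finset (ExtV V × ExtV V)) (W : Finset (ExtV V)) : Finset (ExtV V × ExtV V) :=
  F.filter fun e => e.1 ∈ W ∧ e.2 ∉ W

/-- Total flow of `f` on the edge set `F`. -/
def fSum (f : ExtV V × ExtV V → ℕ) (F : Finset (ExtV V × ExtV V)) : ℕ :=
  ∑ e ∈ F, f e

/-- Embedding of a set of original nodes into the extended graph. -/
def extW (W : Finset V) : Finset (ExtV V) := W.image orig

/-- A walk in the support graph `G^f_ext`: consecutive nodes are joined by extended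
edges carrying positive flow. -/
def IsSupportWalk (N : Network V) (R : Request V) (f : ExtV V × ExtV V → ℕ)
    (p : List (ExtV V)) : Prop :=
  p.Chain' fun a b => (a, b) ∈ Eext N R ∧ 1 ≤ f (a, b)

/-- (IP-1): flow conservation at all original nodes. -/
def IP1 (N : Network V) (R : Request V) (f : ExtV V × ExtV V → ℕ) : Prop :=
  ∀ v : V, fSum f (outV (Eext N R) (orig v)) = fSum f (inV (Eext N R) (orig v))

/-- (IP-2): connectivity inequalities for activated Steiner sites. -/
def IP2 (N : Network V) (R : Request V) (x : V → ℕ) (f : ExtV V × ExtV V → ℕ) : Prop :=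
  ∀ W : Finset V, ∀ s ∈ W, s ∈ R.S → x s ≤ fSum f (outSet (ERext N R) (extW W))

/-- (IP-3): directed Steiner cuts for terminals. -/
def IP3 (N : Network V) (R : Request V) (f : ExtV V × ExtV V → ℕ) : Prop :=
  ∀ W : Finset V, (W ∩ R.T).Nonempty → 1 ≤ fSum f (outSet (ERext N R) (extW W))

/-- Feasibility for the integer program IP-A-CVSAP. -/
def IPFeasible (N : Network V) (R : Request V) (x : V → ℕ) (f : ExtV V × ExtV V → ℕ) : Prop :=
  (∀ s ∈ R.S, x s ≤ 1) ∧
  IP1 N R f ∧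
  IP2 N R x f ∧
  IP3 N R f ∧
  (∀ s ∈ R.S, x s ≤ f (orig s, sinkS)) ∧
  (∀ s ∈ R.S, f (orig s, sinkS) ≤ R.uS s * x s) ∧
  f (orig R.root, sinkR) ≤ R.ur ∧
  (∀ e ∈ N.E, f (orig e.1, orig e.2) ≤ N.uE e) ∧
  (∀ t ∈ R.T, f (src, orig t) = 1) ∧
  (∀ s ∈ R.S, f (src, orig s) = x s)

/-- Objective value of IP-A-CVSAP. -/
noncomputable def costIP (N : Network V) (R : Request V) (x : V → ℕ)
    (f : ExtV V × ExtV V → ℕ) : ℝ :=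
  ∑ e ∈ N.E, N.cE e * f (orig e.1, orig e.2) + ∑ s ∈ R.S, R.cS s * x s

/-- A Virtual Arborescence: nodes, virtual edges and the mapping of virtual edges
onto paths in the underlying graph. -/
structure VirtArb (V : Type) where
  VT : Finset V
  ET : Finset (V × V)
  pi : V × V → List V

/-- `p` is a simple directed path in `N` from `u` to `v`. -/
def IsPathInG (N : Network V) (p : List V) (u v : V) : Prop :=
  p.Chain' (fun a b => (a, b) ∈ N.E) ∧ p.head? = some u ∧ p.getLast? = some v ∧ p.Nodup

/-- The virtual edges whose path uses the edge `e` of the underlying graph. -/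
def pathUses (TA : VirtArb V) (e : V × V) : Finset (V × V) :=
  TA.ET.filter fun d => e ∈ (TA.pi d).zip (TA.pi d).tail

/-- `|π(E_T)[e]|`: the number of paths of the virtual arborescence using edge `e`. -/
def pathCount (TA : VirtArb V) (e : V × V) : ℕ := (pathUses TA e).card

/-- Total degree of node `v` with respect to the virtual edge set `ET`. -/
def degTotal (ET : Finset (V × V)) (v : V) : ℕ :=
  (ET.filter fun e => e.1 = v).card + (ET.filter fun e => e.2 = v).card

/-- `(VT, ET, r)` is an arborescence rooted at `r` with all edges oriented towards `r`. -/
def ArborTowards (VT : Finset V) (ET : Finset (V × V)) (r : V) : Prop :=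
  (∀ e ∈ ET, e.1 ∈ VT ∧ e.2 ∈ VT ∧ e.1 ≠ e.2) ∧
  (∀ v ∈ VT, v ≠ r → (ET.filter fun e => e.1 = v).card = 1) ∧
  (∀ e ∈ ET, e.1 ≠ r) ∧
  (∀ v ∈ VT, ∃ p : List V, p.Chain' (fun a b => (a, b) ∈ ET) ∧
      p.head? = some v ∧ p.getLast? = some r)

/-- `(VT, ET, r)` is an arborescence rooted at `r` with all edges oriented away from `r`. -/
def ArborAway (VT : Finset V) (ET : Finset (V × V)) (r : V) : Prop :=
  (∀ e ∈ ET, e.1 ∈ VT ∧ e.2 ∈ VT ∧ e.1 ≠ e.2) ∧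
  (∀ v ∈ VT, v ≠ r → (ET.filter fun e => e.2 = v).card = 1) ∧
  (∀ e ∈ ET, e.2 ≠ r) ∧
  (∀ v ∈ VT, ∃ p : List V, p.Chain' (fun a b => (a, b) ∈ ET) ∧
      p.head? = some r ∧ p.getLast? = some v)

/-- Feasible solutions of A-CVSAP: all arborescence edges oriented towards the root. -/
def FeasibleACVSAP (N : Network V) (R : Request V) (TA : VirtArb V) : Prop :=
  R.root ∈ TA.VT ∧
  ArborTowards TA.VT TA.ET R.root ∧
  (∀ d ∈ TA.ET, IsPathInG N (TA.pi d) d.1 d.2) ∧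
  R.T ⊆ TA.VT ∧
  TA.VT ⊆ insert R.root (R.S ∪ R.T) ∧
  (∀ t ∈ R.T, degTotal TA.ET t = 1) ∧
  degTotal TA.ET R.root ≤ R.ur ∧
  (∀ s ∈ R.S, s ∈ TA.VT → degTotal TA.ET s ≤ R.uS s + 1) ∧
  (∀ e ∈ N.E, pathCount TA e ≤ N.uE e)

/-- Feasible solutions of M-CVSAP: all arborescence edges oriented away from the root. -/
def FeasibleMCVSAP (N : Network V) (R : Request V) (TA : VirtArb V) : Prop :=
  R.root ∈ TA.VT ∧
  ArborAway TA.VT TA.ET R.root ∧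
  (∀ d ∈ TA.ET, IsPathInG N (TA.pi d) d.1 d.2) ∧
  R.T ⊆ TA.VT ∧
  TA.VT ⊆ insert R.root (R.S ∪ R.T) ∧
  (∀ t ∈ R.T, degTotal TA.ET t = 1) ∧
  degTotal TA.ET R.root ≤ R.ur ∧
  (∀ s ∈ R.S, s ∈ TA.VT → degTotal TA.ET s ≤ R.uS s + 1) ∧
  (∀ e ∈ N.E, pathCount TA e ≤ N.uE e)

/-- Cost of a virtual arborescence. -/
noncomputable def costCVSAP (N : Network V) (R : Request V) (TA : VirtArb V) : ℝ :=
  ∑ e ∈ N.E, N.cE e * pathCount TA e + ∑ s ∈ R.S.filter (· ∈ TA.VT), R.cS s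

/-! If the Steiner sink were not reachable from `u` along flow-carrying edges that start in
`W`, let `A ⊆ W` be the set of nodes so reachable. No flow leaves `A`: an edge into `W ∖ A` would
extend reachability, and flow out of `W` can only go to the Steiner sink. Summing flow
conservation over `A`, the flow entering `A` equals the flow leaving it, hence vanishes; but the
edge `(a, u)` enters `A` with positive flow. A reaching walk is then shortened to a path. -/

open Finset

theorem Finset.sum_inflow_eq_sum_outflow {β M : Type*} [DecidableEq β]
    [AddCancelCommMonoid M] (E : Finset (β × β)) (f : β × β → M) (A : Finset β)
    (hcons : ∀ v ∈ A, ∑ e ∈ E with e.1 = v, f e = ∑ e ∈ E with e.2 = v, f e) :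
    ∑ e ∈ E with e.1 ∉ A ∧ e.2 ∈ A, f e = ∑ e ∈ E with e.1 ∈ A ∧ e.2 ∉ A, f e := by
  have hbalance : ∑ e ∈ E with e.1 ∈ A, f e = ∑ e ∈ E with e.2 ∈ A, f e := by
    rw [← sum_fiberwise_eq_sum_filter, ← sum_fiberwise_eq_sum_filter]
    exact sum_congr rfl hcons
  rw [← sum_filter_add_sum_filter_not (E.filter fun e => e.1 ∈ A) (fun e => e.2 ∈ A),
    ← sum_filter_add_sum_filter_not (E.filter fun e => e.2 ∈ A) (fun e => e.1 ∈ A),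
    filter_filter, filter_filter, filter_filter, filter_filter,
    filter_congr (s := E) (p := fun e => e.2 ∈ A ∧ e.1 ∈ A) (fun _ _ => and_comm),
    filter_congr (s := E) (p := fun e => e.2 ∈ A ∧ e.1 ∉ A) (fun _ _ => and_comm)] at hbalance
  exact (add_left_cancel hbalance).symm

theorem List.IsChain.exists_rel_of_mem_dropLast {α : Type*} {R : α → α → Prop} {l : List α}
    (h : l.IsChain R) {z : α} (hz : z ∈ l.dropLast) : ∃ y, R z y := by
  obtain ⟨i, hi, rfl⟩ := List.getElem_of_mem hz
  rw [List.length_dropLast] at hi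
  exact ⟨_, by simpa using List.isChain_iff_getElem.1 h i (by omega)⟩

theorem Relation.ReflTransGen.exists_nodup_isChain_cons {α : Type*} {r : α → α → Prop}
    {a b : α} (h : Relation.ReflTransGen r a b) :
    ∃ l, (a :: l).IsChain r ∧ (a :: l).Nodup ∧ (a :: l).getLast (List.cons_ne_nil _ _) = b := by
  induction h using Relation.ReflTransGen.head_induction_on with
  | refl => exact ⟨[], .singleton _, List.nodup_singleton _, rfl⟩
  | @head a c hac _ ih =>
    obtain ⟨l, hchain, hnodup, hlast⟩ := ih
    by_cases ha : a ∈ c :: l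
    · obtain ⟨s, t, hst⟩ := List.append_of_mem ha
      refine ⟨t, ?_, ?_, ?_⟩
      · exact hchain.suffix (hst ▸ List.suffix_append _ _)
      · exact hnodup.sublist (hst ▸ (List.suffix_append _ _).sublist)
      · rw [← hlast]; simp [hst]
    · exact ⟨c :: l, hchain.cons_cons hac, List.nodup_cons.2 ⟨ha, hnodup⟩, hlast⟩

def SupportStepFrom (N : Network V) (R : Request V) (f : ExtV V × ExtV V → ℕ) (W : Finset V)
    (x y : ExtV V) : Prop :=
  x ∈ extW W ∧ (x, y) ∈ Eext N R ∧ 1 ≤ f (x, y)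

theorem reflTransGen_supportStepFrom_sinkS (N : Network V) (R : Request V)
    (f : ExtV V × ExtV V → ℕ) (W : Finset V)
    (hcons : ∀ v ∈ W, fSum f (outV (Eext N R) (orig v)) = fSum f (inV (Eext N R) (orig v)))
    (hcut : fSum f (outSet (ERext N R) (extW W)) = 0)
    {u : V} (hu : u ∈ W) {a : ExtV V} (ha : (a, orig u) ∈ Eext N R)
    (haW : a ∉ extW W) (haf : 1 ≤ f (a, orig u)) :
    Relation.ReflTransGen (SupportStepFrom N R f W) (orig u) sinkS := by
  classical
  by_contra hsink
  set A := (extW W).filter (Relation.ReflTransGen (SupportStepFrom N R f W) (orig u))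
  have hAW : A ⊆ extW W := filter_subset _ _
  have hconsA : ∀ v ∈ A,
      ∑ e ∈ Eext N R with e.1 = v, f e = ∑ e ∈ Eext N R with e.2 = v, f e := by
    intro v hv
    obtain ⟨w, hw, rfl⟩ := mem_image.1 (hAW hv)
    exact hcons w hw
  have houtflow : ∀ e ∈ (Eext N R).filter (fun e => e.1 ∈ A ∧ e.2 ∉ A), f e = 0 := by
    intro e he
    obtain ⟨heE, he₁, he₂⟩ := mem_filter.1 he
    by_contra hfe
    have hreach : Relation.ReflTransGen (SupportStepFrom N R f W) (orig u) e.2 :=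
      (mem_filter.1 he₁).2.tail ⟨hAW he₁, heE, Nat.one_le_iff_ne_zero.2 hfe⟩
    by_cases heW : e.2 ∈ extW W
    · exact he₂ (mem_filter.2 ⟨heW, hreach⟩)
    have hsinkS : e.2 ≠ sinkS := fun h => hsink (h ▸ hreach)
    have hcutE : e ∈ outSet (ERext N R) (extW W) :=
      mem_filter.2 ⟨mem_filter.2 ⟨heE, hsinkS⟩, hAW he₁, heW⟩
    exact hfe (sum_eq_zero_iff.1 hcut e hcutE)
  have hinflow := sum_inflow_eq_sum_outflow (Eext N R) f A hconsA
  rw [sum_eq_zero houtflow, sum_eq_zero_iff] at hinflow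
  have huA : orig u ∈ A := mem_filter.2 ⟨mem_image_of_mem _ hu, .refl⟩
  have hau := hinflow (a, orig u) (mem_filter.2 ⟨ha, fun h => haW (hAW h), huA⟩)
  omega

theorem exists_path_to_steiner_sink_general (N : Network V) (R : Request V)
    (f : ExtV V × ExtV V → ℕ) (W : Finset V)
    (hcons : ∀ v ∈ W, fSum f (outV (Eext N R) (ExtV.orig v)) =
      fSum f (inV (Eext N R) (ExtV.orig v)))
    (hcut : fSum f (outSet (ERext N R) (extW W)) = 0)
    (u : V) (hu : u ∈ W) (a : ExtV V) (ha : (a, ExtV.orig u) ∈ Eext N R)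
    (haW : a ∉ extW W) (haf : 1 ≤ f (a, ExtV.orig u)) :
    ∃ p : List (ExtV V),
      IsSupportWalk N R f p ∧ p.Nodup ∧
      p.head? = some (ExtV.orig u) ∧ p.getLast? = some ExtV.sinkS ∧
      ∀ z ∈ p.dropLast, z ∈ extW W := by
  obtain ⟨l, hchain, hnodup, hlast⟩ :=
    (reflTransGen_supportStepFrom_sinkS N R f W hcons hcut hu ha haW haf).exists_nodup_isChain_cons
  refine ⟨orig u :: l, hchain.imp fun _ _ h => h.2, hnodup, rfl, ?_, fun z hz => ?_⟩
  · rw [List.getLast?_eq_some_getLast (List.cons_ne_nil _ _), hlast]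
  · obtain ⟨_, hz, -⟩ := hchain.exists_rel_of_mem_dropLast hz
    exact hz

theorem exists_path_to_steiner_sink [Fintype V] (N : Network V) (R : Request V)
    (hWF : RequestWF N R) (f : ExtV V × ExtV V → ℕ) (W : Finset V)
    (hcons : ∀ v ∈ W, fSum f (outV (Eext N R) (ExtV.orig v)) =
      fSum f (inV (Eext N R) (ExtV.orig v)))
    (hcut : fSum f (outSet (ERext N R) (extW W)) = 0)
    (u : V) (hu : u ∈ W) (a : ExtV V) (ha : (a, ExtV.orig u) ∈ Eext N R)
    (haW : a ∉ extW W) (haf : 1 ≤ f (a, ExtV.orig u)) :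
    ∃ p : List (ExtV V),
      IsSupportWalk N R f p ∧ p.Nodup ∧
      p.head? = some (ExtV.orig u) ∧ p.getLast? = some ExtV.sinkS ∧
      ∀ z ∈ p.dropLast, z ∈ extW W :=
  exists_path_to_steiner_sink_general N R f W hcons hcut u hu a ha haW haf
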